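/- (SUFT causal bound for N control treatments.) Let N ≥ 1 and let the treatments be the target treatment t=1 and the control treatments t=j for j = 2, ..., N+1. If the loss function L satisfies the loss-difference inequality and all relevant integrands are integrable, then q₁·ε¹_F + Σ_{j=2}^{N+1} q_j·εʲ_F ≤ Σ_{j=2}^{N+1} ( q_j·ε^{1,j}_CF + (1/N)·q₁·εʲ_CF + q_j·ψ^{1,j} + (1/N)·q₁·ψʲ + q_j·δ^{1,j} + (1/N)·q₁·δʲ ). -/
import Mathlib


open MeasureTheory ProbabilityTheory

private lemma suft_key {μ ν : Measure ℝ} [IsProbabilityMeasure μ] [IsProbabilityMeasure ν]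
    {L : ℝ → ℝ → ℝ} (hL : ∀ x y x' y', L x y - L x' y' ≤ L x x' + L y y') (a b : ℝ)
    (h1 : Integrable (fun y => L y a) μ) (h2 : Integrable (fun y => L y b) ν)
    (h3 : Integrable (fun p : ℝ × ℝ => L p.1 p.2) (μ.prod ν)) :
    ∫ y, L y a ∂μ ≤ (∫ y, L y b ∂ν) + L a b + ∫ y, (∫ y', L y y' ∂ν) ∂μ := by
  have hmf : Measure.map Prod.fst (μ.prod ν) = μ := by simp
  have hms : Measure.map Prod.snd (μ.prod ν) = ν := by simp
  have h1m : AEStronglyMeasurable (fun y => L y a) (Measure.map Prod.fst (μ.prod ν)) := by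
    rw [hmf]; exact h1.aestronglyMeasurable
  have h2m : AEStronglyMeasurable (fun y => L y b) (Measure.map Prod.snd (μ.prod ν)) := by
    rw [hms]; exact h2.aestronglyMeasurable
  have H1 : Integrable (fun p : ℝ × ℝ => L p.1 a) (μ.prod ν) :=
    (integrable_map_measure h1m measurable_fst.aemeasurable).mp (by rw [hmf]; exact h1)
  have H2 : Integrable (fun p : ℝ × ℝ => L p.2 b) (μ.prod ν) :=
    (integrable_map_measure h2m measurable_snd.aemeasurable).mp (by rw [hms]; exact h2)
  have e1 : ∫ y, L y a ∂μ = ∫ p : ℝ × ℝ, L p.1 a ∂(μ.prod ν) := by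
    have := integral_map (μ := μ.prod ν) measurable_fst.aemeasurable h1m
    rwa [hmf] at this
  have e2 : ∫ y, L y b ∂ν = ∫ p : ℝ × ℝ, L p.2 b ∂(μ.prod ν) := by
    have := integral_map (μ := μ.prod ν) measurable_snd.aemeasurable h2m
    rwa [hms] at this
  have e3 : ∫ p : ℝ × ℝ, L p.1 p.2 ∂(μ.prod ν) = ∫ y, (∫ y', L y y' ∂ν) ∂μ :=
    integral_prod _ h3
  rw [e1, e2, ← e3]
  have hpt : ∀ p : ℝ × ℝ, L p.1 a ≤ L p.2 b + L a b + L p.1 p.2 := by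
    intro p; have := hL p.1 a p.2 b; linarith
  have HA : Integrable (fun p : ℝ × ℝ => L p.2 b + L a b) (μ.prod ν) :=
    H2.add (integrable_const _)
  calc ∫ p : ℝ × ℝ, L p.1 a ∂(μ.prod ν)
      ≤ ∫ p : ℝ × ℝ, (L p.2 b + L a b + L p.1 p.2) ∂(μ.prod ν) :=
        integral_mono H1 (HA.add h3) hpt
    _ = (∫ p : ℝ × ℝ, L p.2 b ∂(μ.prod ν)) + L a b + ∫ p : ℝ × ℝ, L p.1 p.2 ∂(μ.prod ν) := by
        rw [integral_add HA h3, integral_add H2 (integrable_const _), integral_const]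
        simp

/-- (SUFT causal bound for N control treatments.) Treatment `t = 1` is the target
treatment and `t = j` for `j = 2, ..., N+1` are the control treatments. If the loss
function `L` satisfies the loss-difference inequality and all relevant integrands are
integrable, then
`q₁·ε¹_F + Σ_{j=2}^{N+1} q_j·εʲ_F
  ≤ Σ_{j=2}^{N+1} ( q_j·ε^{1,j}_CF + (1/N)·q₁·εʲ_CF + q_j·ψ^{1,j} + (1/N)·q₁·ψʲ
                    + q_j·δ^{1,j} + (1/N)·q₁·δʲ )`,
where `ε¹_F = E_{x~P₁}[E_{y~κ₁ x}[L(y,φ₁(x))]]`, `εʲ_F = E_{x~P_j}[E_{y~κ_j x}[L(y,φ_j(x))]]`,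
`ε^{1,j}_CF = E_{x~P_j}[E_{y~κ₁ x}[L(y,φ₁(x))]]`, `εʲ_CF = E_{x~P₁}[E_{y~κ_j x}[L(y,φ_j(x))]]`,
`ψ^{1,j} = E_{x~P_j}[L(φ_j(x),φ₁(x))]`, `ψʲ = E_{x~P₁}[L(φ₁(x),φ_j(x))]`,
`δ^{1,j} = E_{x~P_j}[E_{y_j~κ_j x}[E_{y₁~κ₁ x}[L(y_j,y₁)]]]`, and
`δʲ = E_{x~P₁}[E_{y₁~κ₁ x}[E_{y_j~κ_j x}[L(y₁,y_j)]]]`. -/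
theorem suft_causal_bound_N_controls
    {X : Type*} [MeasurableSpace X] (N : ℕ) (hN : 1 ≤ N)
    (P : ℕ → Measure X) (κ : ℕ → Kernel X ℝ) (φ : ℕ → X → ℝ) (q : ℕ → ℝ)
    (hP : ∀ t ∈ Finset.Icc 1 (N + 1), IsProbabilityMeasure (P t))
    (hκ : ∀ t ∈ Finset.Icc 1 (N + 1), IsMarkovKernel (κ t))
    (hq : ∀ t ∈ Finset.Icc 1 (N + 1), 0 ≤ q t)
    (L : ℝ → ℝ → ℝ) (hL0 : ∀ u v, 0 ≤ L u v)
    (hL : ∀ x y x' y', L x y - L x' y' ≤ L x x' + L y y')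
    (hInner : ∀ t ∈ Finset.Icc 1 (N + 1), ∀ x, Integrable (fun y => L y (φ t x)) (κ t x))
    (hOuter : ∀ s ∈ Finset.Icc 1 (N + 1), ∀ t ∈ Finset.Icc 1 (N + 1),
      Integrable (fun x => ∫ y, L y (φ t x) ∂(κ t x)) (P s))
    (hψ : ∀ s ∈ Finset.Icc 1 (N + 1), ∀ t ∈ Finset.Icc 1 (N + 1),
      Integrable (fun x => L (φ s x) (φ t x)) (P s))
    (hProd : ∀ s ∈ Finset.Icc 1 (N + 1), ∀ t ∈ Finset.Icc 1 (N + 1), ∀ x,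
      Integrable (fun p : ℝ × ℝ => L p.1 p.2) (((κ s) x).prod ((κ t) x)))
    (hδ : ∀ s ∈ Finset.Icc 1 (N + 1), ∀ t ∈ Finset.Icc 1 (N + 1),
      Integrable (fun x => ∫ ys, (∫ yt, L ys yt ∂(κ t x)) ∂(κ s x)) (P s)) :
    q 1 * (∫ x, (∫ y, L y (φ 1 x) ∂(κ 1 x)) ∂(P 1))
      + ∑ j ∈ Finset.Icc 2 (N + 1), q j * (∫ x, (∫ y, L y (φ j x) ∂(κ j x)) ∂(P j))
    ≤ ∑ j ∈ Finset.Icc 2 (N + 1),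
        (q j * (∫ x, (∫ y, L y (φ 1 x) ∂(κ 1 x)) ∂(P j))
          + (1 / (N : ℝ)) * q 1 * (∫ x, (∫ y, L y (φ j x) ∂(κ j x)) ∂(P 1))
          + q j * (∫ x, L (φ j x) (φ 1 x) ∂(P j))
          + (1 / (N : ℝ)) * q 1 * (∫ x, L (φ 1 x) (φ j x) ∂(P 1))
          + q j * (∫ x, (∫ yj, (∫ y1, L yj y1 ∂(κ 1 x)) ∂(κ j x)) ∂(P j))
          + (1 / (N : ℝ)) * q 1 * (∫ x, (∫ y1, (∫ yj, L y1 yj ∂(κ j x)) ∂(κ 1 x)) ∂(P 1))) := by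
  have h1mem : (1 : ℕ) ∈ Finset.Icc 1 (N + 1) := by
    simp [Finset.mem_Icc]
  have hmem : ∀ j ∈ Finset.Icc 2 (N + 1), j ∈ Finset.Icc 1 (N + 1) := by
    intro j hj; rw [Finset.mem_Icc] at *; omega
  -- main comparison lemma at the level of a base measure
  have main : ∀ a ∈ Finset.Icc 1 (N + 1), ∀ b ∈ Finset.Icc 1 (N + 1),
      (∫ x, (∫ y, L y (φ a x) ∂(κ a x)) ∂(P a))
        ≤ (∫ x, (∫ y, L y (φ b x) ∂(κ b x)) ∂(P a))
          + (∫ x, L (φ a x) (φ b x) ∂(P a))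
          + (∫ x, (∫ ya, (∫ yb, L ya yb ∂(κ b x)) ∂(κ a x)) ∂(P a)) := by
    intro a ha b hb
    haveI := hP a ha
    haveI := hκ a ha
    haveI := hκ b hb
    have hpt : ∀ x, (∫ y, L y (φ a x) ∂(κ a x))
        ≤ (∫ y, L y (φ b x) ∂(κ b x)) + L (φ a x) (φ b x)
          + ∫ ya, (∫ yb, L ya yb ∂(κ b x)) ∂(κ a x) := by
      intro x
      exact suft_key hL (φ a x) (φ b x) (hInner a ha x) (hInner b hb x) (hProd a ha b hb x)
    have IA : Integrable (fun x => (∫ y, L y (φ b x) ∂(κ b x)) + L (φ a x) (φ b x)) (P a) :=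
      (hOuter a ha b hb).add (hψ a ha b hb)
    calc (∫ x, (∫ y, L y (φ a x) ∂(κ a x)) ∂(P a))
        ≤ ∫ x, ((∫ y, L y (φ b x) ∂(κ b x)) + L (φ a x) (φ b x)
            + ∫ ya, (∫ yb, L ya yb ∂(κ b x)) ∂(κ a x)) ∂(P a) :=
          integral_mono (hOuter a ha a ha) (IA.add (hδ a ha b hb)) hpt
      _ = _ := by
          rw [integral_add IA (hδ a ha b hb),
            integral_add (hOuter a ha b hb) (hψ a ha b hb)]
  have hNpos : (0 : ℝ) < (N : ℝ) := by exact_mod_cast Nat.pos_of_ne_zero (by omega)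
  have hcard : (Finset.Icc 2 (N + 1)).card = N := by
    rw [Nat.card_Icc]; omega
  have hsplit : q 1 * (∫ x, (∫ y, L y (φ 1 x) ∂(κ 1 x)) ∂(P 1))
      = ∑ j ∈ Finset.Icc 2 (N + 1),
          (1 / (N : ℝ)) * q 1 * (∫ x, (∫ y, L y (φ 1 x) ∂(κ 1 x)) ∂(P 1)) := by
    rw [Finset.sum_const, hcard, nsmul_eq_mul]
    field_simp
  rw [hsplit, ← Finset.sum_add_distrib]
  refine Finset.sum_le_sum ?_
  intro j hj
  have hj' := hmem j hj
  have h1 := main j hj' 1 h1mem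
  have h2 := main 1 h1mem j hj'
  have hq1 : 0 ≤ (1 / (N : ℝ)) * q 1 := mul_nonneg (by positivity) (hq 1 h1mem)
  have hqj : 0 ≤ q j := hq j hj'
  have h1' := mul_le_mul_of_nonneg_left h1 hqj
  have h2' := mul_le_mul_of_nonneg_left h2 hq1
  rw [mul_add, mul_add] at h1' h2'
  linarith
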